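/- √5 · log φ = (5/(3·2²⁰)) · ∑_{k=0}^∞ (1/2²⁰)^k · ∑_{j=1}^{40} a_j/(40k + j), where φ = (1+√5)/2 and (a₁,...,a₄₀) = (2¹⁹, 0, 2¹⁸, 2¹⁸, 0, 0, -2¹⁶, 2¹⁶, 2¹⁵, 0, -2¹⁴, -2¹⁴, 2¹³, 0, 0, -2¹², -2¹¹, 0, -2¹⁰, 0, -2⁹, 0, -2⁸, -2⁸, 0, 0, 2⁶, -2⁶, -2⁵, 0, 2⁴, 2⁴, -2³, 0, 0, 2², 2, 0, 1, 0). -/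

import Mathlib

/-!
Let `σ₁, σ₂` be the roots of `X² - (1 + √5) X + (√5 - 1)` and `σ₃, σ₄` those of its Galois
conjugate; they are `2√2 cos (kπ/20)` for `k = 1, 9` and `k = 7, 17`. For each of them the roots
`z, z̄` of `X² - σ X + 2` are `√2 ζ, √2 ζ̄` with `ζ` a 40th root of unity, so the Lucas sequence
`V_n(σ, 2) = zⁿ + z̄ⁿ` satisfies `V_{n+40} = 2²⁰ V_n`, and
`∑ V_n(σ, 2) / (2ⁿ n) = -log |1 - z/2|² = -log ((3 - σ)/2)`.
The coefficients are `a_n = 2^(20-n) (√5/10) (V_n(σ₁) + V_n(σ₂) - V_n(σ₃) - V_n(σ₄))`, which is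
checked for `n ≤ 40` by computing in `ℤ√5`, and the four logarithms add up to
`log ((5 + 2√5)/(5 - 2√5)) = log φ⁶`.
-/

/-- The coefficient vector (a₁, ..., a₄₀) of the binary BBP-type formula for √5 log φ,
indexed by `j ∈ Fin 40` (so `bbpCoeff j` corresponds to `a_{j+1}`). -/
def bbpCoeff : Fin 40 → ℝ :=
  ![2 ^ 19, 0, 2 ^ 18, 2 ^ 18, 0, 0, -(2 ^ 16), 2 ^ 16, 2 ^ 15, 0, -(2 ^ 14), -(2 ^ 14),
    2 ^ 13, 0, 0, -(2 ^ 12), -(2 ^ 11), 0, -(2 ^ 10), 0, -(2 ^ 9), 0, -(2 ^ 8), -(2 ^ 8),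
    0, 0, 2 ^ 6, -(2 ^ 6), -(2 ^ 5), 0, 2 ^ 4, 2 ^ 4, -(2 ^ 3), 0, 0, 2 ^ 2, 2, 0, 1, 0]

open Real Zsqrtd

section Algebra

variable {R S : Type*} [CommRing R] [CommRing S]

def lucasV (P Q : R) : ℕ → R
  | 0 => 2
  | 1 => P
  | n + 2 => P * lucasV P Q (n + 1) - Q * lucasV P Q n

theorem lucasV_add_mul (a b : R) : ∀ n, lucasV (a + b) (a * b) n = a ^ n + b ^ n
  | 0 => by norm_num [lucasV]
  | 1 => by simp [lucasV]
  | n + 2 => by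
    rw [lucasV, lucasV_add_mul a b (n + 1), lucasV_add_mul a b n]
    ring

theorem map_lucasV (f : R →+* S) (P Q : R) : ∀ n, f (lucasV P Q n) = lucasV (f P) (f Q) n
  | 0 => map_ofNat f 2
  | 1 => rfl
  | n + 2 => by
    rw [lucasV, lucasV, map_sub, map_mul, map_mul, map_lucasV f P Q (n + 1), map_lucasV f P Q n]

theorem lucasV_mul_mul_sq (t P Q : R) : ∀ n, lucasV (t * P) (t ^ 2 * Q) n = t ^ n * lucasV P Q n
  | 0 => by simp [lucasV]
  | 1 => by simp [lucasV]
  | n + 2 => by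
    rw [lucasV, lucasV, lucasV_mul_mul_sq t P Q (n + 1), lucasV_mul_mul_sq t P Q n]
    ring

/-- The coordinates of `lucasV σ 2 n` in the basis `1, σ` of `ℤ√5[σ]`, where
`σ² = (1 + √5) σ - (√5 - 1)`. -/
def lucasCoords : ℕ → ℤ√5 × ℤ√5
  | 0 => (2, 0)
  | 1 => (0, 1)
  | n + 2 => ((1 - sqrtd) * (lucasCoords (n + 1)).2 - 2 * (lucasCoords n).1,
      (lucasCoords (n + 1)).1 + (1 + sqrtd) * (lucasCoords (n + 1)).2 - 2 * (lucasCoords n).2)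

theorem lucasV_eq_lucasCoords (f : ℤ√5 →+* R) {σ : R}
    (hσ : σ ^ 2 = f (1 + sqrtd) * σ - f (sqrtd - 1)) :
    ∀ n, lucasV σ 2 n = f (lucasCoords n).1 + f (lucasCoords n).2 * σ
  | 0 => by simp [lucasV, lucasCoords, map_ofNat f 2]
  | 1 => by simp [lucasV, lucasCoords]
  | n + 2 => by
    rw [lucasV, lucasV_eq_lucasCoords f hσ (n + 1), lucasV_eq_lucasCoords f hσ n, lucasCoords]
    simp only [map_add, map_sub, map_mul, map_ofNat, map_one] at hσ ⊢
    linear_combination f (lucasCoords (n + 1)).2 * hσ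

theorem lucasCoords_add_forty : ∀ n, lucasCoords (n + 40) = 2 ^ 20 • lucasCoords n
  | 0 => by
    rw [show lucasCoords 40 = (2 ^ 21, 0) by decide +kernel]
    norm_num [lucasCoords, Prod.smul_mk]
  | 1 => by
    rw [show lucasCoords 41 = (0, 2 ^ 20) by decide +kernel]
    norm_num [lucasCoords, Prod.smul_mk]
  | n + 2 => by
    rw [show n + 2 + 40 = n + 40 + 2 by ring, lucasCoords.eq_3 (n + 40), lucasCoords.eq_3 n,
      lucasCoords_add_forty (n + 1), lucasCoords_add_forty n]
    refine Prod.ext ?_ ?_ <;> simp only [Prod.smul_fst, Prod.smul_snd] <;> ring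

def lucasTrace (n : ℕ) : ℤ√5 := 2 * (lucasCoords n).1 + (1 + sqrtd) * (lucasCoords n).2

theorem lucasTrace_add_forty (n : ℕ) : lucasTrace (n + 40) = (2 ^ 20 : ℤ) * lucasTrace n := by
  simp only [lucasTrace, lucasCoords_add_forty n, Prod.smul_fst, Prod.smul_snd]
  push_cast
  ring

theorem lucasV_add_lucasV_eq_lucasTrace (f : ℤ√5 →+* R) {σ₁ σ₂ : R}
    (hsum : σ₁ + σ₂ = f (1 + sqrtd)) (hprod : σ₁ * σ₂ = f (sqrtd - 1)) (n : ℕ) :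
    lucasV σ₁ 2 n + lucasV σ₂ 2 n = f (lucasTrace n) := by
  rw [lucasV_eq_lucasCoords f (σ := σ₁) (by rw [← hsum, ← hprod]; ring),
    lucasV_eq_lucasCoords f (σ := σ₂) (by rw [← hsum, ← hprod]; ring), lucasTrace]
  simp only [map_add, map_mul, map_ofNat, ← hsum]
  ring

end Algebra

theorem hasSum_lucasV_div {P Q : ℝ} (hPQ : P ^ 2 < 4 * Q) (hQ : Q < 1) :
    HasSum (fun n : ℕ => lucasV P Q n / n) (-log (1 - P + Q)) := by
  set z : ℂ := ⟨P / 2, √(4 * Q - P ^ 2) / 2⟩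
  have hd : √(4 * Q - P ^ 2) ^ 2 = 4 * Q - P ^ 2 := sq_sqrt (by linarith)
  have hnormSq : Complex.normSq z = Q := by
    rw [Complex.normSq_mk]
    linear_combination hd / 4
  have hz : ‖z‖ < 1 := by
    rwa [← sq_lt_one_iff₀ (norm_nonneg z), Complex.sq_norm, hnormSq]
  have hlucas (n : ℕ) : lucasV P Q n = 2 * (z ^ n).re := by
    have hsum : z + (starRingEnd ℂ) z = (P : ℂ) := by
      rw [Complex.add_conj, show z.re = P / 2 from rfl]
      push_cast
      ring
    have hprod : z * (starRingEnd ℂ) z = (Q : ℂ) := by rw [Complex.mul_conj, hnormSq]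
    have h := map_lucasV Complex.ofRealHom P Q n
    rw [Complex.ofRealHom_eq_coe, Complex.ofRealHom_eq_coe, Complex.ofRealHom_eq_coe, ← hsum,
      ← hprod, lucasV_add_mul, ← map_pow, Complex.add_conj] at h
    exact_mod_cast h
  have hlog : 2 * log ‖1 - z‖ = log (1 - P + Q) := by
    rw [← Nat.cast_ofNat, ← log_pow, Complex.sq_norm, Complex.normSq_apply]
    congr 1
    simp only [Complex.sub_re, Complex.one_re, Complex.sub_im, Complex.one_im, z]
    linear_combination hd / 4
  have h := (Complex.hasSum_re (Complex.hasSum_taylorSeries_neg_log hz)).mul_left 2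
  simp only [Complex.div_natCast_re, Complex.neg_re, Complex.log_re] at h
  have hterm : (fun n : ℕ => lucasV P Q n / n) = fun n : ℕ => 2 * ((z ^ n).re / n) := by
    funext n
    rw [hlucas, mul_div_assoc]
  rwa [hterm, ← hlog, ← mul_neg]

theorem hasSum_lucasV_two_div {σ : ℝ} (hσ : σ ^ 2 < 8) :
    HasSum (fun n : ℕ => lucasV σ 2 n / (2 ^ n * n)) (-log ((3 - σ) / 2)) := by
  have h := hasSum_lucasV_div (P := σ / 2) (Q := 1 / 2) (by linarith) (by norm_num)
  have hscale (n : ℕ) : lucasV σ 2 n = 2 ^ n * lucasV (σ / 2) (1 / 2) n := by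
    rw [← lucasV_mul_mul_sq]
    norm_num [mul_div_cancel₀]
  convert h using 2 with n
  · rw [hscale, mul_div_mul_left _ _ (pow_ne_zero n two_ne_zero)]
  · ring_nf

theorem hasSum_ringHom_lucasTrace_div (f : ℤ√5 →+* ℝ) :
    HasSum (fun n : ℕ => f (lucasTrace n) / (2 ^ n * n)) (-log ((5 - 2 * f sqrtd) / 4)) := by
  set u := f sqrtd
  have hu : u ^ 2 = 5 := by
    rw [sq, ← map_mul, dmuld, map_intCast]
    norm_num
  have hd : √(10 - 2 * u) ^ 2 = 10 - 2 * u := sq_sqrt (by nlinarith)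
  set σ₁ := (1 + u + √(10 - 2 * u)) / 2
  set σ₂ := (1 + u - √(10 - 2 * u)) / 2
  have hsum : σ₁ + σ₂ = 1 + u := by ring
  have hprod : σ₁ * σ₂ = u - 1 := by linear_combination (hu - hd) / 4
  -- `σ₁, σ₂ = 2√2 cos θ, 2√2 sin θ` with `θ = π/20` or `7π/20`
  have hsq : σ₁ ^ 2 + σ₂ ^ 2 = 8 := by linear_combination (hd + hu) / 2
  have hu1 : u - 1 ≠ 0 := by
    intro h
    nlinarith
  have h₁ : σ₁ ^ 2 < 8 := by
    have := sq_pos_of_ne_zero (right_ne_zero_of_mul (hprod ▸ hu1))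
    linarith
  have h₂ : σ₂ ^ 2 < 8 := by
    have := sq_pos_of_ne_zero (left_ne_zero_of_mul (hprod ▸ hu1))
    linarith
  have hpos₁ : 0 < (3 - σ₁) / 2 := by nlinarith
  have hpos₂ : 0 < (3 - σ₂) / 2 := by nlinarith
  convert (hasSum_lucasV_two_div h₁).add (hasSum_lucasV_two_div h₂) using 2 with n
  · rw [← add_div, lucasV_add_lucasV_eq_lucasTrace f (by simp [hsum, u]) (by simp [hprod, u])]
  · rw [← neg_add, ← log_mul hpos₁.ne' hpos₂.ne']
    congr 2
    linear_combination (3 * hsum - hprod) / 4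

theorem log_five_add_two_sqrt_five_sub_log :
    log ((5 + 2 * √5) / 4) - log ((5 - 2 * √5) / 4) = 6 * log goldenRatio := by
  have hlt : 2 * √5 < 5 := by nlinarith [sq_sqrt (show (0 : ℝ) ≤ 5 by norm_num), sqrt_nonneg 5]
  have hsqrt : √5 = 2 * goldenRatio - 1 := by rw [goldenRatio]; ring
  have hpow : goldenRatio ^ 6 = 8 * goldenRatio + 5 := by
    linear_combination (goldenRatio ^ 4 + goldenRatio ^ 3 + 2 * goldenRatio ^ 2
      + 3 * goldenRatio + 5) * goldenRatio_sq
  rw [← log_div (by positivity) (by linarith), show 6 * log goldenRatio = log (goldenRatio ^ 6) by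
    rw [log_pow]; norm_num]
  congr 1
  rw [div_eq_iff (by linarith), hpow, hsqrt]
  linear_combination 8 * goldenRatio_sq

theorem hasSum_im_lucasTrace_div :
    HasSum (fun n : ℕ => ((lucasTrace n).im : ℝ) / (2 ^ n * n)) (3 * log goldenRatio / √5) := by
  have h5 : √5 * √5 = ((5 : ℤ) : ℝ) := by
    push_cast
    exact mul_self_sqrt (by norm_num)
  set f : ℤ√5 →+* ℝ := lift ⟨√5, h5⟩
  set fConj : ℤ√5 →+* ℝ := lift ⟨-√5, by rw [neg_mul_neg]; exact h5⟩
  have hterm (n : ℕ) : ((lucasTrace n).im : ℝ) / (2 ^ n * n)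
      = (f (lucasTrace n) / (2 ^ n * n) - fConj (lucasTrace n) / (2 ^ n * n)) / (2 * √5) := by
    simp only [f, fConj, lift_apply_apply]
    field_simp
    ring
  have hval : 3 * log goldenRatio / √5
      = (-log ((5 - 2 * f sqrtd) / 4) - -log ((5 - 2 * fConj sqrtd) / 4)) / (2 * √5) := by
    simp only [f, fConj, lift_apply_apply, sqrtd, Int.cast_zero, Int.cast_one, zero_add, one_mul,
      mul_neg, sub_neg_eq_add, neg_add_eq_sub, log_five_add_two_sqrt_five_sub_log]
    field_simp
    ring
  rw [funext hterm, hval]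
  exact ((hasSum_ringHom_lucasTrace_div f).sub (hasSum_ringHom_lucasTrace_div fConj)).div_const _

theorem HasSum.sum_blocks_of_add_eq_mul {c : ℕ → ℝ} {N : ℕ} [NeZero N] {r S : ℝ}
    (hc : ∀ n, c (n + N) = r * c n) (h : HasSum (fun n : ℕ => c n / n) S) :
    HasSum (fun k : ℕ => r ^ k * ∑ j : Fin N, c (j + 1) / (N * k + j + 1)) S := by
  have hblock (k j : ℕ) : c (k * N + j + 1) = r ^ k * c (j + 1) := by
    induction k with
    | zero => simp
    | succ k ih =>
      rw [show (k + 1) * N + j + 1 = k * N + j + 1 + N by ring, hc, ih, pow_succ]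
      ring
  have hshift : HasSum (fun n : ℕ => c (n + 1) / (n + 1)) S := by
    simpa using (hasSum_nat_add_iff' 1).mpr h
  refine ((Nat.divModEquiv N).symm.hasSum_iff.mpr hshift).prod_fiberwise fun k => ?_
  convert hasSum_fintype _ using 1
  simp only [Function.comp_apply, Nat.divModEquiv_symm_apply, Finset.mul_sum, hblock]
  refine Finset.sum_congr rfl fun j _ => ?_
  push_cast
  ring

noncomputable def bbpSeq (n : ℕ) : ℝ := 2 ^ 20 * (lucasTrace n).im / 2 ^ n

theorem bbpSeq_add_forty (n : ℕ) : bbpSeq (n + 40) = 1 / 2 ^ 20 * bbpSeq n := by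
  simp only [bbpSeq, lucasTrace_add_forty, im_smul, pow_add]
  push_cast
  field_simp
  norm_num

theorem bbpSeq_succ (j : Fin 40) : bbpSeq (j + 1) = bbpCoeff j := by
  rw [bbpSeq, div_eq_iff (by positivity)]
  fin_cases j <;> simp [bbpCoeff] <;> norm_cast

theorem hasSum_bbpSeq_div :
    HasSum (fun n : ℕ => bbpSeq n / n) (2 ^ 20 * (3 * log goldenRatio / √5)) := by
  simpa only [bbpSeq, mul_div_assoc, div_div] using hasSum_im_lucasTrace_div.mul_left (2 ^ 20)

theorem bbp_sqrt5_log_phi :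
    Real.sqrt 5 * Real.log ((1 + Real.sqrt 5) / 2)
      = (5 / (3 * 2 ^ 20)) *
          ∑' k : ℕ, ((1 : ℝ) / 2 ^ 20) ^ k *
            ∑ j : Fin 40, bbpCoeff j / (40 * k + (j : ℕ) + 1) := by
  have h := (hasSum_bbpSeq_div.sum_blocks_of_add_eq_mul bbpSeq_add_forty).tsum_eq
  simp only [bbpSeq_succ, Nat.cast_ofNat] at h
  rw [h, goldenRatio]
  field_simp
  rw [sq_sqrt (by norm_num)]
  ring
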